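/- arXiv:1802.10006 — 7 statements merged into one kernel-verified Lean document; each statement's English description precedes it below -/
import Mathlib

section
/- Let X be a connected non-empty finite topological space and let A be a non-empty subspace of X, with inclusion map i : A → X. Then i is a Hurewicz cofibration if and only if there exists a continuous retraction r : X → A of i (i.e. r ∘ i = Id_A) such that i ∘ r ≤ Id_X in the pointwise specialization preorder. -/
open unitInterval

set_option autoImplicit false

universe u v

/-- The specialization preorder: `x ≤ y` iff every open set containing `y` contains `x`. -/
def specLE {X : Type*} [TopologicalSpace X] (x y : X) : Prop :=
  ∀ U : Set X, IsOpen U → y ∈ U → x ∈ U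

/-- A continuous map `i : A → X` is a (Hurewicz) cofibration iff it has the homotopy
extension property with respect to all topological spaces. -/
def IsCofibration {A : Type*} {X : Type*} [TopologicalSpace A] [TopologicalSpace X]
    (i : C(A, X)) : Prop :=
  ∀ (Z : Type v) [TopologicalSpace Z] (f : C(X, Z)) (H : C(A × I, Z)),
    (∀ a, H (a, 0) = f (i a)) →
    ∃ G : C(X × I, Z),
      (∀ x, G (x, 0) = f x) ∧ ∀ a t, G (i a, t) = H (a, t)

/-- `x` is a down beat point of the subspace `S`:
the set of points of `S` strictly below `x` has a maximum. -/
def IsDownBeatPoint {X : Type*} [TopologicalSpace X] (S : Set X) (x : X) : Prop :=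
  x ∈ S ∧ ∃ m ∈ S, m ≠ x ∧ specLE m x ∧
    ∀ z ∈ S, z ≠ x → specLE z x → specLE z m

/-- `T` is a dbp–retract of `S`: `T` is obtained from `S` by successively
removing down beat points. -/
inductive IsDbpRetract {X : Type*} [TopologicalSpace X] : Set X → Set X → Prop
  | refl (S : Set X) : IsDbpRetract S S
  | step {S T : Set X} (x : X) (hx : IsDownBeatPoint S x)
      (h : IsDbpRetract (S \ {x}) T) : IsDbpRetract S T

/-- The minimal open set containing `x` (in a finite space): the intersection of all
open sets containing `x`. -/
def minOpen {X : Type*} [TopologicalSpace X] (x : X) : Set X :=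
  ⋂₀ {U : Set X | IsOpen U ∧ x ∈ U}

/-!
Given `r`, a homotopy extension is `G (x, 0) = f x` and `G (x, t) = H (r x, t)` for `t ≠ 0`; it is
continuous because `r x ⤳ x`. Conversely, the homotopy extension property tested on
`X × {0} ∪ A × I` itself gives a retraction `R` of `X × I` onto it. As `X` is finite and connected,
`R` preserves the `I`-coordinate, and for small `t > 0` the point `R (x, t)` still specializes to
`x = R (x, 0)`, since the points specializing to `x` form an open set. Then `r x = (R (x, t)).1`.
-/

open Filter Topology

section Specialization

variable {X Y : Type*} [TopologicalSpace X] [TopologicalSpace Y]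

theorem specLE_iff_specializes {x y : X} : specLE x y ↔ x ⤳ y :=
  specializes_iff_forall_open.symm

theorem PreconnectedSpace.apply_eq_of_finite [PreconnectedSpace X] [Finite X] [T1Space Y]
    {f : X → Y} (hf : Continuous f) (x y : X) : f x = f y :=
  Set.not_nontrivial_iff.1
    (fun h => (isPreconnected_range hf).infinite_of_nontrivial h (Set.finite_range f))
    ⟨x, rfl⟩ ⟨y, rfl⟩

theorem Continuous.piecewise_of_specializes {s : Set X} [DecidablePred (· ∈ s)] {g k : X → Y}
    (hs : IsOpen s) (hg : Continuous g) (hk : Continuous k) (hkg : ∀ x ∉ s, k x ⤳ g x) :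
    Continuous (s.piecewise k g) := by
  refine continuous_def.2 fun W hW => ?_
  have hpre : s.piecewise k g ⁻¹' W = k ⁻¹' W ∩ (g ⁻¹' W ∪ s) := by
    ext x
    by_cases hx : x ∈ s
    · simp [hx]
    · simpa [hx] using fun hgx => (hkg x hx).mem_open hW hgx
  rw [hpre]
  exact (hW.preimage hk).inter ((hW.preimage hg).union hs)

end Specialization

theorem isCofibration_of_retraction_specializes {X : Type*} [TopologicalSpace X] {A : Set X}
    (r : C(X, A)) (hr : ∀ a : A, r a = a) (hle : ∀ x, (r x : X) ⤳ x) :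
    IsCofibration.{v} (⟨Subtype.val, continuous_subtype_val⟩ : C(A, X)) := by
  intro Z _ f H hH
  classical
  let s : Set (X × I) := {p | p.2 ≠ 0}
  let K : X × I → Z := fun p => H (r p.1, p.2)
  have hK : Continuous K := by fun_prop
  have hG : Continuous (s.piecewise K (f ∘ Prod.fst)) := by
    refine .piecewise_of_specializes (isOpen_ne.preimage continuous_snd) (by fun_prop) hK ?_
    rintro ⟨x, t⟩ ht
    obtain rfl : t = 0 := not_not.1 ht
    simpa [K, hH] using (hle x).map f.continuous
  refine ⟨⟨_, hG⟩, fun x => by simp [s], fun a t => ?_⟩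
  by_cases ht : t = 0
  · subst ht; simp [s, hH]
  · simp [s, K, ht, hr]

def cylinderBase {X : Type*} (A : Set X) : Set (X × I) :=
  {p | p.2 = 0 ∨ p.1 ∈ A}

theorem IsCofibration.exists_retraction_cylinderBase {X : Type u} [TopologicalSpace X]
    [Small.{v} X] {A : Set X}
    (hA : IsCofibration.{v} (⟨Subtype.val, continuous_subtype_val⟩ : C(A, X))) :
    ∃ R : C(X × I, X × I), (∀ p, R p ∈ cylinderBase A) ∧ ∀ p ∈ cylinderBase A, R p = p := by
  let e := Shrink.homeomorph.{v} (cylinderBase A)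
  let f : C(X, Shrink.{v} (cylinderBase A)) := ⟨fun x => e ⟨(x, 0), Or.inl rfl⟩, by fun_prop⟩
  let H : C(A × I, Shrink.{v} (cylinderBase A)) :=
    ⟨fun p => e ⟨(p.1, p.2), Or.inr p.1.2⟩, by fun_prop⟩
  obtain ⟨G, hG0, hGA⟩ := hA _ f H fun _ => rfl
  refine ⟨⟨fun p => e.symm (G p), by fun_prop⟩, fun p => (e.symm (G p)).2, ?_⟩
  rintro ⟨x, t⟩ (rfl | hx)
  · simp [hG0, f]
  · simpa [H] using congrArg (fun z => (e.symm z : X × I)) (hGA ⟨x, hx⟩ t)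

theorem exists_retraction_specializes_of_retraction_cylinderBase {X : Type*}
    [TopologicalSpace X] [Finite X] [PreconnectedSpace X] {A : Set X} (hA : A.Nonempty)
    (R : C(X × I, X × I)) (hRA : ∀ p, R p ∈ cylinderBase A) (hR : ∀ p ∈ cylinderBase A, R p = p) :
    ∃ r : C(X, A), (∀ a : A, r a = a) ∧ ∀ x, (r x : X) ⤳ x := by
  have hR_snd : ∀ x t, (R (x, t)).2 = t := by
    obtain ⟨a, ha⟩ := hA
    intro x t
    rw [PreconnectedSpace.apply_eq_of_finite (f := fun x => (R (x, t)).2) (by fun_prop) x a,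
      hR (a, t) (Or.inr ha)]
  have h_near_zero : ∀ᶠ t in 𝓝 (0 : I), ∀ x, (R (x, t)).1 ⤳ x := by
    refine eventually_all.2 fun x => ?_
    have hcont : Tendsto (fun t => (R (x, t)).1) (𝓝 0) (𝓝 x) := by
      simpa [hR (x, 0) (Or.inl rfl)] using (show Continuous fun t => (R (x, t)).1 by
        fun_prop).tendsto 0
    exact hcont.eventually_mem (isOpen_nhdsKer.mem_nhds (mem_nhdsKer_singleton.2 le_rfl))
      |>.mono fun _ => mem_nhdsKer_singleton.1
  obtain ⟨t₀, hspec, ht₀⟩ :=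
    ((h_near_zero.filter_mono nhdsWithin_le_nhds).and
      (self_mem_nhdsWithin (s := {(0 : I)}ᶜ))).exists
  have hmem : ∀ x, (R (x, t₀)).1 ∈ A := fun x =>
    (hRA (x, t₀)).resolve_left (by rw [hR_snd]; exact ht₀)
  refine ⟨⟨fun x => ⟨_, hmem x⟩, by fun_prop⟩, fun a => ?_, hspec⟩
  exact Subtype.ext (congrArg Prod.fst (hR (a, t₀) (Or.inr a.2)))

/-- Let `X` be a connected non-empty finite topological space and `A` a
non-empty subspace. The inclusion `i : A ↪ X` is a Hurewicz cofibration iff there is a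
continuous retraction `r : X → A` of `i` with `i ∘ r ≤ Id_X` pointwise in the
specialization preorder. -/
theorem cofibration_iff_exists_retraction_le_id
    {X : Type u} [TopologicalSpace X] [Finite X] [ConnectedSpace X]
    (A : Set X) (hA : A.Nonempty) :
    IsCofibration (⟨Subtype.val, continuous_subtype_val⟩ : C(A, X)) ↔
      ∃ r : C(X, A), (∀ a : A, r (a : X) = a) ∧ ∀ x : X, specLE ((r x : X)) x := by
  simp only [specLE_iff_specializes]
  constructor
  · intro hcof
    obtain ⟨R, hRA, hR⟩ := hcof.exists_retraction_cylinderBase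
    exact exists_retraction_specializes_of_retraction_cylinderBase hA R hRA hR
  · rintro ⟨r, hr, hle⟩
    exact isCofibration_of_retraction_specializes r hr hle
end

section
/- Let Y be a finite T₀-space, let X be a subspace of Y and let A ⊆ X. If A is a dbp–retract of Y, then A is a dbp–retract of X. -/
open unitInterval

set_option autoImplicit false

universe u v

/-!
A dbp–retract `A` of `S` is the same thing as a monotone retraction `r : S → A` with `r y ≤ y`
for every `y` (removing a down beat point `x` with maximum `m` below it extends `r` by
`x ↦ r m`; conversely a minimal point of `S \ A` is a down beat point of `S` with `r x` the
maximum below it). Such a retraction of `Y` onto `A` restricts to one of `X` onto `A`.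
-/

section DbpRetract

variable {Y : Type u} [TopologicalSpace Y]

lemma specLE_refl (x : Y) : specLE x x := fun _ _ h => h

lemma specLE_trans {a b c : Y} (hab : specLE a b) (hbc : specLE b c) : specLE a c :=
  fun U hU hc => hab U hU (hbc U hU hc)

lemma specLE_iff_specializes_s5 {a b : Y} : specLE a b ↔ a ⤳ b :=
  specializes_iff_forall_open.symm

lemma exists_specLE_minimal [Finite Y] [T0Space Y] {s : Set Y} (hs : s.Nonempty) :
    ∃ x ∈ s, ∀ z ∈ s, specLE z x → z = x := by
  let _ := specializationOrder Y
  obtain ⟨x, hxs, hx⟩ := s.toFinite.exists_maximal hs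
  refine ⟨x, hxs, fun z hzs hzx => ?_⟩
  rw [specLE_iff_specializes_s5] at hzx
  exact (hzx.antisymm (hx hzs hzx)).eq

structure IsDownRetraction (S T : Set Y) (r : Y → Y) : Prop where
  subset : T ⊆ S
  mapsTo : Set.MapsTo r S T
  apply_of_mem : ∀ t ∈ T, r t = t
  specLE_self : ∀ y ∈ S, specLE (r y) y
  specLE_apply : ∀ a ∈ S, ∀ b ∈ S, specLE a b → specLE (r a) (r b)

namespace IsDownRetraction

variable {S S' T : Set Y} {r : Y → Y}

lemma restrict (hr : IsDownRetraction S T r) (hTS' : T ⊆ S') (hS'S : S' ⊆ S) :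
    IsDownRetraction S' T r where
  subset := hTS'
  mapsTo := hr.mapsTo.mono_left hS'S
  apply_of_mem := hr.apply_of_mem
  specLE_self y hy := hr.specLE_self y (hS'S hy)
  specLE_apply a ha b hb := hr.specLE_apply a (hS'S ha) b (hS'S hb)

lemma update_downBeatPoint [DecidableEq Y] {x m : Y} (hmS : m ∈ S) (hmx : m ≠ x)
    (hmle : specLE m x) (hmax : ∀ z ∈ S, z ≠ x → specLE z x → specLE z m)
    (hr : IsDownRetraction (S \ {x}) T r) :
    IsDownRetraction S T (Function.update r x (r m)) := by
  have hm : m ∈ S \ {x} := ⟨hmS, hmx⟩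
  have hmem {y} (hyS : y ∈ S) (hyx : y ≠ x) : y ∈ S \ {x} := ⟨hyS, hyx⟩
  have hxT : x ∉ T := fun hxT => (hr.subset hxT).2 rfl
  refine ⟨hr.subset.trans Set.sdiff_subset, fun y hyS => ?_, fun t ht => ?_, fun y hyS => ?_,
    fun a haS b hbS hab => ?_⟩
  · rcases eq_or_ne y x with rfl | hyx
    · simpa using hr.mapsTo hm
    · simpa [hyx] using hr.mapsTo (hmem hyS hyx)
  · simpa [ne_of_mem_of_not_mem ht hxT] using hr.apply_of_mem t ht
  · rcases eq_or_ne y x with rfl | hyx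
    · simpa using specLE_trans (hr.specLE_self m hm) hmle
    · simpa [hyx] using hr.specLE_self y (hmem hyS hyx)
  · rcases eq_or_ne a x with hax | hax <;> rcases eq_or_ne b x with hbx | hbx
    · simpa [hax, hbx] using specLE_refl (r m)
    · subst hax
      simpa [hbx] using hr.specLE_apply m hm b (hmem hbS hbx) (specLE_trans hmle hab)
    · subst hbx
      simpa [hax] using hr.specLE_apply a (hmem haS hax) m hm (hmax a haS hax hab)
    · simpa [hax, hbx] using hr.specLE_apply a (hmem haS hax) b (hmem hbS hbx) hab

lemma isDownBeatPoint_of_minimal (hr : IsDownRetraction S T r) {x : Y} (hx : x ∈ S \ T)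
    (hmin : ∀ z ∈ S \ T, specLE z x → z = x) : IsDownBeatPoint S x := by
  have hrx : r x ∈ T := hr.mapsTo hx.1
  refine ⟨hx.1, r x, hr.subset hrx, ne_of_mem_of_not_mem hrx hx.2, hr.specLE_self x hx.1,
    fun z hzS hzx hzle => ?_⟩
  have hzT : z ∈ T := by_contra fun hzT => hzx (hmin z ⟨hzS, hzT⟩ hzle)
  simpa [hr.apply_of_mem z hzT] using hr.specLE_apply z hzS x hx.1 hzle

lemma isDbpRetract [Finite Y] [T0Space Y] {S T : Set Y} {r : Y → Y}
    (hr : IsDownRetraction S T r) : IsDbpRetract S T := by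
  rcases (S \ T).eq_empty_or_nonempty with hST | hne
  · obtain rfl : S = T := (Set.sdiff_eq_empty.mp hST).antisymm hr.subset
    exact .refl S
  · obtain ⟨x, hx, hmin⟩ := exists_specLE_minimal hne
    have hTS' : T ⊆ S \ {x} := fun t ht => ⟨hr.subset ht, ne_of_mem_of_not_mem ht hx.2⟩
    exact .step x (hr.isDownBeatPoint_of_minimal hx hmin)
      (hr.restrict hTS' Set.sdiff_subset).isDbpRetract
termination_by (S \ T).ncard
decreasing_by
  rw [Set.sdiff_sdiff_comm]
  exact Set.ncard_sdiff_singleton_lt_of_mem hx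

end IsDownRetraction

lemma IsDbpRetract.exists_isDownRetraction {S T : Set Y} (h : IsDbpRetract S T) :
    ∃ r : Y → Y, IsDownRetraction S T r := by
  induction h with
  | refl S => exact ⟨id, subset_rfl, fun y hy => hy, fun _ _ => rfl,
      fun y _ => specLE_refl y, fun _ _ _ _ hab => hab⟩
  | step x hx _ ih =>
    classical
    obtain ⟨-, m, hmS, hmx, hmle, hmax⟩ := hx
    obtain ⟨r, hr⟩ := ih
    exact ⟨_, hr.update_downBeatPoint hmS hmx hmle hmax⟩

end DbpRetract

/-- Let `Y` be a finite T₀-space, `X` a subspace of `Y` and `A ⊆ X`.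
If `A` is a dbp–retract of `Y`, then `A` is a dbp–retract of `X`. -/
theorem dbpRetract_of_subset_of_dbpRetract_univ
    {Y : Type u} [TopologicalSpace Y] [Finite Y] [T0Space Y]
    (X A : Set Y) (hAX : A ⊆ X)
    (h : IsDbpRetract (Set.univ : Set Y) A) :
    IsDbpRetract X A := by
  obtain ⟨r, hr⟩ := h.exists_isDownRetraction
  exact (hr.restrict hAX (Set.subset_univ X)).isDbpRetract
end

section
/- Let X be a topological space and let A be a finite subspace of X. Then a subset C of the subspace X × {0} ∪ A × [0,1] of X × [0,1] is open in X × {0} ∪ A × [0,1] if and only if C ∩ (X × {0}) is open in X × {0} and C ∩ (A × [0,1]) is open in A × [0,1]. -/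
open unitInterval

set_option autoImplicit false

universe u v

/-!
Openness in a subspace is local, and `𝓝[B ∪ T] p = 𝓝[B] p ⊔ 𝓝[T] p`, so `C` is open in `B ∪ T`
iff at each of its points it is a neighbourhood within `B` and within `T`. Off the closed set
`B = X × {0}` the first condition is void. At a point `(x, 0)`, openness in `B` gives a
neighbourhood `U` of `x` with `U × {0} ⊆ C`, and openness in `T = A × I` gives, for each of the
finitely many `a ∈ A` with `(a, 0) ∈ C`, a neighbourhood `V_a` of `0` with `{a} × V_a ⊆ C`;
then `C` contains `(U × ⋂ V_a) ∩ T`.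
-/

open Filter Topology Set

theorem isOpen_preimage_val_iff_mem_nhdsWithin {Y : Type*} [TopologicalSpace Y] {S s : Set Y} :
    IsOpen (Subtype.val ⁻¹' s : Set S) ↔ ∀ p ∈ S ∩ s, s ∈ 𝓝[S] p := by
  simp only [isOpen_iff_mem_nhds, preimage_coe_mem_nhds_subtype, Subtype.forall, mem_preimage,
    mem_inter_iff, and_imp]

theorem mem_nhdsWithin_fst_preimage_of_finite {Y Z : Type*} [TopologicalSpace Y]
    [TopologicalSpace Z] {A : Set Y} (hA : A.Finite) {s : Set (Y × Z)} {y : Y} {z : Z}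
    (hbase : s ∈ 𝓝[{p | p.2 = z}] (y, z))
    (hfibre : ∀ a ∈ A, (a, z) ∈ s → s ∈ 𝓝[{p | p.1 ∈ A}] (a, z)) :
    s ∈ 𝓝[{p | p.1 ∈ A}] (y, z) := by
  have hbase' : ∀ᶠ y' in 𝓝 y, (y', z) ∈ s :=
    tendsto_nhdsWithin_of_tendsto_nhds_of_eventually_within _
      ((continuous_id.prodMk continuous_const).tendsto y) (.of_forall fun _ => rfl) hbase
  have hfibres : ∀ᶠ z' in 𝓝 z, ∀ a ∈ A, (a, z) ∈ s → (a, z') ∈ s := by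
    refine (eventually_all_finite hA).2 fun a ha => eventually_imp_distrib_left.2 fun haz => ?_
    exact tendsto_nhdsWithin_of_tendsto_nhds_of_eventually_within _
      ((continuous_const.prodMk continuous_id).tendsto z) (.of_forall fun _ => ha) (hfibre a ha haz)
  rw [← preimage_ofPred_eq, ← prod_univ, nhdsWithin_prod_eq, nhdsWithin_univ]
  filter_upwards [(eventually_mem_nhdsWithin.and (mem_nhdsWithin_of_mem_nhds hbase')).prod_mk
    hfibres] with ⟨a, z'⟩ ⟨⟨ha, haz⟩, hz'⟩ using hz' a ha haz

theorem open_in_union_iff_open_in_pieces_general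
    {X : Type u} [TopologicalSpace X] (A : Set X) (hA : A.Finite)
    (C : Set (X × I)) :
    IsOpen (Subtype.val ⁻¹' C : Set {p : X × I | p.2 = 0 ∨ p.1 ∈ A}) ↔
      IsOpen (Subtype.val ⁻¹' C : Set {p : X × I | p.2 = 0}) ∧
      IsOpen (Subtype.val ⁻¹' C : Set {p : X × I | p.1 ∈ A}) := by
  set B : Set (X × I) := {p | p.2 = 0}
  set T : Set (X × I) := {p | p.1 ∈ A}
  change IsOpen (Subtype.val ⁻¹' C : Set ↥(B ∪ T)) ↔ _
  simp only [isOpen_preimage_val_iff_mem_nhdsWithin, nhdsWithin_union, mem_sup]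
  constructor
  · intro h
    exact ⟨fun p hp => (h p ⟨.inl hp.1, hp.2⟩).1, fun p hp => (h p ⟨.inr hp.1, hp.2⟩).2⟩
  rintro ⟨hB, hT⟩ p ⟨hpB | hpT, hpC⟩
  · refine ⟨hB p ⟨hpB, hpC⟩, ?_⟩
    obtain ⟨x, t⟩ := p
    obtain rfl : t = 0 := hpB
    exact mem_nhdsWithin_fst_preimage_of_finite hA (hB _ ⟨rfl, hpC⟩)
      fun a ha haC => hT _ ⟨ha, haC⟩
  · refine ⟨?_, hT p ⟨hpT, hpC⟩⟩
    by_cases hpB : p ∈ B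
    · exact hB p ⟨hpB, hpC⟩
    · have hBclosed : IsClosed B := isClosed_eq continuous_snd continuous_const
      rw [notMem_closure_iff_nhdsWithin_eq_bot.1 (by rwa [hBclosed.closure_eq])]
      exact mem_bot

/-- Let `X` be a topological space and `A` a finite subspace of `X`.
A subset `C` of `X × {0} ∪ A × I` is open in `X × {0} ∪ A × I` iff `C ∩ (X × {0})` is
open in `X × {0}` and `C ∩ (A × I)` is open in `A × I`. -/
theorem open_in_union_iff_open_in_pieces
    {X : Type u} [TopologicalSpace X] (A : Set X) (hA : A.Finite)
    (C : Set (X × I)) (hC : C ⊆ {p : X × I | p.2 = 0 ∨ p.1 ∈ A}) :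
    IsOpen (Subtype.val ⁻¹' C : Set {p : X × I | p.2 = 0 ∨ p.1 ∈ A}) ↔
      IsOpen (Subtype.val ⁻¹' C : Set {p : X × I | p.2 = 0}) ∧
      IsOpen (Subtype.val ⁻¹' C : Set {p : X × I | p.1 ∈ A}) :=
  open_in_union_iff_open_in_pieces_general A hA C
end

section
/- Let X be a connected non-empty finite topological space and let A be a non-empty subspace of X. If the inclusion i : A → X is a Hurewicz cofibration, then A is a strong deformation retract of X; in particular, i is a homotopy equivalence. -/
/-!
The homotopy extension property, applied to the identity of the subspace `X × {0} ∪ A × I`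
of `X × I`, gives a retraction `r` of `X × I` onto it. For fixed `t`, the second coordinate of
`r (·, t)` is a continuous map from a finite space to the T1 space `I`, hence locally constant,
hence constant on the connected space `X`; at a point of `A` it equals `t`. So
`r (x, 1) ∈ A × I` for every `x`, and the first coordinate of `r` is a strong deformation
retraction of `X` onto `A`.
-/

open unitInterval

set_option autoImplicit false

universe u v

universe w

theorem IsCofibration.exists_extension_of_small {A X : Type*} [TopologicalSpace A]
    [TopologicalSpace X] {i : C(A, X)} (hi : IsCofibration.{v} i) {Z : Type w}
    [TopologicalSpace Z] [Small.{v} Z] (f : C(X, Z)) (H : C(A × I, Z))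
    (hH : ∀ a, H (a, 0) = f (i a)) :
    ∃ G : C(X × I, Z), (∀ x, G (x, 0) = f x) ∧ ∀ a t, G (i a, t) = H (a, t) := by
  let e := Shrink.homeomorph.{v} Z
  obtain ⟨G, hG0, hGi⟩ := hi (Shrink.{v} Z) ((e : C(Z, Shrink.{v} Z)).comp f)
    ((e : C(Z, Shrink.{v} Z)).comp H) fun a => by simp [hH]
  exact ⟨(e.symm : C(Shrink.{v} Z, Z)).comp G, fun x => by simp [hG0], fun a t => by simp [hGi]⟩

-- Topologized as a subspace of `X × I`; for closed `A` this is the mapping cylinder of `A ↪ X`.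
def mappingCylinder {X : Type*} (A : Set X) : Set (X × I) :=
  {p | p.2 = 0 ∨ p.1 ∈ A}

theorem IsCofibration.exists_retraction_mappingCylinder {X : Type*} [TopologicalSpace X]
    [Small.{v} X] {A : Set X}
    (hA : IsCofibration.{v} (⟨Subtype.val, continuous_subtype_val⟩ : C(A, X))) :
    ∃ r : C(X × I, X × I), (∀ p, r p ∈ mappingCylinder A) ∧ (∀ x, r (x, 0) = (x, 0)) ∧
      ∀ a ∈ A, ∀ t, r (a, t) = (a, t) := by
  let f : C(X, mappingCylinder A) :=
    ⟨fun x => ⟨(x, 0), Or.inl rfl⟩, by fun_prop⟩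
  let H : C(A × I, mappingCylinder A) :=
    ⟨fun p => ⟨(p.1, p.2), Or.inr p.1.2⟩, by fun_prop⟩
  obtain ⟨G, hG0, hGA⟩ := hA.exists_extension_of_small f H fun _ => rfl
  refine ⟨(⟨Subtype.val, continuous_subtype_val⟩ : C(mappingCylinder A, X × I)).comp G,
    fun p => (G p).2, fun x => ?_, fun a ha t => ?_⟩
  · simp [hG0, f]
  · simpa [H] using congrArg Subtype.val (hGA ⟨a, ha⟩ t)

theorem Continuous.isLocallyConstant_of_alexandrovDiscrete {X Y : Type*} [TopologicalSpace X]
    [AlexandrovDiscrete X] [TopologicalSpace Y] [T1Space Y] {f : X → Y} (hf : Continuous f) :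
    IsLocallyConstant f :=
  IsLocallyConstant.iff_isOpen_fiber.2 fun _ =>
    isOpen_iff_forall_specializes.2 fun _ _ hxz hz => (hxz.map hf).eq.trans hz

theorem exists_strongDeformationRetraction_of_retraction_mappingCylinder {X : Type*}
    [TopologicalSpace X] [AlexandrovDiscrete X] [PreconnectedSpace X] {A : Set X}
    (hA : A.Nonempty) (r : C(X × I, X × I)) (hr : ∀ p, r p ∈ mappingCylinder A)
    (hr0 : ∀ x, r (x, 0) = (x, 0)) (hrA : ∀ a ∈ A, ∀ t, r (a, t) = (a, t)) :
    ∃ F : C(X × I, X), (∀ x, F (x, 0) = x) ∧ (∀ x, F (x, 1) ∈ A) ∧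
      ∀ a ∈ A, ∀ t, F (a, t) = a := by
  obtain ⟨a, ha⟩ := hA
  have hr_snd : ∀ x t, (r (x, t)).2 = t := fun x t => by
    have hconst : IsLocallyConstant fun y => (r (y, t)).2 :=
      Continuous.isLocallyConstant_of_alexandrovDiscrete (by fun_prop)
    rw [hconst.apply_eq_of_preconnectedSpace x a, hrA a ha t]
  refine ⟨ContinuousMap.fst.comp r, fun x => by simp [hr0], fun x => ?_,
    fun a ha t => by simp [hrA a ha t]⟩
  have hx : (r (x, 1)).2 = 0 ∨ (r (x, 1)).1 ∈ A := hr (x, 1)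
  rw [hr_snd] at hx
  exact hx.resolve_left one_ne_zero

theorem exists_homotopic_inverse_of_deformationRetraction {X : Type*} [TopologicalSpace X]
    {A : Set X} (F : C(X × I, X)) (hF0 : ∀ x, F (x, 0) = x) (hF1 : ∀ x, F (x, 1) ∈ A)
    (hFA : ∀ a ∈ A, F (a, 1) = a) :
    ∃ g : C(X, A),
      (g.comp (⟨Subtype.val, continuous_subtype_val⟩ : C(A, X))).Homotopic
        (ContinuousMap.id A) ∧
      ((⟨Subtype.val, continuous_subtype_val⟩ : C(A, X)).comp g).Homotopic
        (ContinuousMap.id X) := by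
  let g : C(X, A) := ⟨fun x => ⟨F (x, 1), hF1 x⟩, by fun_prop⟩
  have hg : g.comp (⟨Subtype.val, continuous_subtype_val⟩ : C(A, X)) = ContinuousMap.id A := by
    ext a
    exact hFA a a.2
  let K : ContinuousMap.Homotopy (ContinuousMap.id X)
      ((⟨Subtype.val, continuous_subtype_val⟩ : C(A, X)).comp g) :=
    { toContinuousMap := F.comp ContinuousMap.prodSwap
      map_zero_left := hF0
      map_one_left := fun _ => rfl }
  exact ⟨g, hg ▸ ContinuousMap.Homotopic.refl _, ⟨K.symm⟩⟩

/-- Let `X` be a connected non-empty finite topological space and `A`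
a non-empty subspace. If the inclusion `i : A ↪ X` is a Hurewicz cofibration, then `A`
is a strong deformation retract of `X`; in particular, `i` is a homotopy equivalence. -/
theorem cofibration_implies_strong_deformation_retract
    {X : Type u} [TopologicalSpace X] [Finite X] [ConnectedSpace X]
    (A : Set X) (hA : A.Nonempty)
    (hcof : IsCofibration (⟨Subtype.val, continuous_subtype_val⟩ : C(A, X))) :
    (∃ F : C(X × I, X),
      (∀ x, F (x, 0) = x) ∧ (∀ x, F (x, 1) ∈ A) ∧ ∀ a ∈ A, ∀ t, F (a, t) = a) ∧
    ∃ g : C(X, A),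
      (g.comp (⟨Subtype.val, continuous_subtype_val⟩ : C(A, X))).Homotopic
        (ContinuousMap.id A) ∧
      ((⟨Subtype.val, continuous_subtype_val⟩ : C(A, X)).comp g).Homotopic
        (ContinuousMap.id X) := by
  obtain ⟨r, hr, hr0, hrA⟩ := IsCofibration.exists_retraction_mappingCylinder hcof
  obtain ⟨F, hF0, hF1, hFA⟩ :=
    exists_strongDeformationRetraction_of_retraction_mappingCylinder hA r hr hr0 hrA
  exact ⟨⟨F, hF0, hF1, hFA⟩,
    exists_homotopic_inverse_of_deformationRetraction F hF0 hF1 fun a ha => hFA a ha 1⟩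
end

section
/- Let X be a connected non-empty finite topological space and let A be a non-empty closed subspace of X. If the inclusion i : A → X is a Hurewicz cofibration, then A = X. -/
open unitInterval

set_option autoImplicit false

universe u v

/-!
The homotopy extension property for the inclusion `X × {0} ∪ A × I ⊆ X × I` yields a retraction
`r` of `X × I` onto this subspace. If `x ⤳ a` with `a ∈ A`, then `r (x, t) ⤳ r (a, t) = (a, t)`,
and since `I` is T₁ the second coordinate of `r (x, t)` is `t`. Hence `t ↦ (r (x, t)).1` is a
path from `x` that lies in `A` for `t ≠ 0`, and closedness of `A` puts `x` in `A`. So `A` is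
stable under generalization, hence open because a finite space is Alexandrov-discrete, and
connectedness of `X` gives `A = X`.
-/

theorem IsCofibration.exists_retraction {A : Type*} {X : Type*} [TopologicalSpace A]
    [TopologicalSpace X] [Small.{v} X] {i : C(A, X)} (hi : IsCofibration.{v} i) :
    ∃ r : C(X × I, X × I), (∀ x, r (x, 0) = (x, 0)) ∧ (∀ a t, r (i a, t) = (i a, t)) ∧
      ∀ p, (r p).2 = 0 ∨ (r p).1 ∈ Set.range i := by
  let M : Set (X × I) := {p | p.2 = 0 ∨ p.1 ∈ Set.range i}
  -- the homotopy extension property is only available for targets in `Type v`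
  let e := Shrink.homeomorph.{v} M
  obtain ⟨G, hG₀, hGi⟩ := hi (Shrink.{v} M)
    ⟨fun x ↦ e ⟨(x, 0), .inl rfl⟩, by fun_prop⟩
    ⟨fun p ↦ e ⟨(i p.1, p.2), .inr ⟨p.1, rfl⟩⟩, by fun_prop⟩
    fun _ ↦ rfl
  refine ⟨⟨fun p ↦ e.symm (G p), by fun_prop⟩,
    fun x ↦ ?_, fun a t ↦ ?_, fun p ↦ (e.symm (G p)).property⟩
  · simp [hG₀]
  · simp [hGi]

theorem stableUnderGeneralization_of_retraction {X : Type*} [TopologicalSpace X] {A : Set X}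
    (hA : IsClosed A) (r : C(X × I, X × I)) (hr₀ : ∀ x, r (x, 0) = (x, 0))
    (hrA : ∀ a ∈ A, ∀ t, r (a, t) = (a, t)) (hr : ∀ p, (r p).2 = 0 ∨ (r p).1 ∈ A) :
    StableUnderGeneralization A := by
  intro a x hxa ha
  have hsnd (t : I) : (r (x, t)).2 = t := by
    have : r (x, t) ⤳ (a, t) := hrA a ha t ▸ (hxa.prod specializes_rfl).map r.continuous
    exact (this.map continuous_snd).eq
  let φ : I → X := fun t ↦ (r (x, t)).1
  have hφ : {(0 : I)}ᶜ ⊆ φ ⁻¹' A := fun t ht ↦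
    (hr (x, t)).resolve_left fun h ↦ ht (by rwa [hsnd t] at h)
  have h₀ : (0 : I) ∈ φ ⁻¹' A :=
    (hA.preimage (by fun_prop)).closure_subset_iff.2 hφ <|
      (dense_compl_singleton (0 : I)).closure_eq ▸ Set.mem_univ 0
  simpa [φ, hr₀] using h₀

/-- Let `X` be a connected non-empty finite topological space and `A`
a non-empty closed subspace. If the inclusion `i : A ↪ X` is a Hurewicz cofibration,
then `A = X`. -/
theorem closed_cofibration_implies_eq_univ
    {X : Type u} [TopologicalSpace X] [Finite X] [ConnectedSpace X]
    (A : Set X) (hA : A.Nonempty) (hclosed : IsClosed A)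
    (hcof : IsCofibration (⟨Subtype.val, continuous_subtype_val⟩ : C(A, X))) :
    A = Set.univ := by
  obtain ⟨r, hr₀, hrA, hr⟩ := hcof.exists_retraction
  simp only [ContinuousMap.coe_mk, Subtype.range_coe] at hrA hr
  have hgen : StableUnderGeneralization A :=
    stableUnderGeneralization_of_retraction hclosed r hr₀ (fun a ha ↦ hrA ⟨a, ha⟩) hr
  have hopen : IsOpen A := isOpen_iff_forall_specializes.2 fun _ _ h hy ↦ hgen h hy
  exact IsClopen.eq_univ ⟨hclosed, hopen⟩ hA
end

section
/- Let X and Y be non-empty connected finite topological spaces and let f : X → Y be a Hurewicz cofibration which is a closed map (equivalently, whose image is closed, f being an embedding). Then f is a homeomorphism. -/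
open unitInterval

set_option autoImplicit false

universe u v

/-!
A cofibration `i : A → X` is injective: extend the homotopy `A × I → Set A` that is `∅` before
time `1` and `{a}` at time `1` (for the coinduced topology on `Set A`) from the constant map `∅`
on `X`; at time `1` the extension recovers `a` from `i a`.

A closed cofibration has its image closed under generalisation: homotopy extension retracts
`X × I` onto `X × {0} ∪ range i × I`, and the retraction sends `(x, t)` with `x ⤳ i a` and
`t ≠ 0` into `range i × {t}`; letting `t → 0` puts `x` in the closed set `range i`. In a finite
space such a set is open, so when `X` is connected it is everything.
-/

open Set Function

namespace IsCofibration

universe w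

variable {A : Type*} {X : Type*} [TopologicalSpace A] [TopologicalSpace X] {i : C(A, X)}

theorem exists_extension {Z : Type w} [TopologicalSpace Z] [Small.{v} Z]
    (hi : IsCofibration.{v} i) (g : C(X, Z)) (H : C(A × I, Z)) (hH : ∀ a, H (a, 0) = g (i a)) :
    ∃ G : C(X × I, Z), (∀ x, G (x, 0) = g x) ∧ ∀ a t, G (i a, t) = H (a, t) := by
  let e := Shrink.homeomorph.{v} Z
  obtain ⟨G, hG0, hG⟩ :=
    hi (Shrink Z) ((e : C(Z, Shrink Z)).comp g) ((e : C(Z, Shrink Z)).comp H) (by simp [hH])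
  exact ⟨(e.symm : C(Shrink Z, Z)).comp G, by simp [hG0], by simp [hG]⟩

theorem injective [Small.{v} A] (hi : IsCofibration.{v} i) : Injective i := by
  let jump : A × I → Set A := fun p => if p.2 = 1 then {p.1} else ∅
  let _ : TopologicalSpace (Set A) := .coinduced jump inferInstance
  obtain ⟨G, -, hG⟩ := hi.exists_extension (.const X ∅) ⟨jump, continuous_coinduced_rng⟩
    fun _ => if_neg zero_ne_one
  intro a₁ a₂ h
  have := hG a₁ 1
  rw [h, hG a₂ 1] at this
  simpa [jump] using this.symm

theorem mem_range_of_specializes [Small.{v} X] (hi : IsCofibration.{v} i)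
    (hclosed : IsClosed (range i)) {x : X} {a : A} (hx : x ⤳ i a) : x ∈ range i := by
  obtain ⟨G, hG0, hG⟩ := hi.exists_extension (Z := {p : X × I // p.2 = 0 ∨ p.1 ∈ range i})
    ⟨fun y => ⟨(y, 0), .inl rfl⟩, by fun_prop⟩
    ⟨fun p => ⟨(i p.1, p.2), .inr ⟨p.1, rfl⟩⟩, by fun_prop⟩ fun _ => rfl
  have hsnd (t : I) : (G (x, t)).1.2 = t := by
    have := ((hx.prod (specializes_refl t)).map G.continuous).map
      (continuous_snd.comp continuous_subtype_val)
    simpa [hG] using this.eq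
  have hmem : ({0}ᶜ : Set I) ⊆ {t | (G (x, t)).1.1 ∈ range i} := fun t ht =>
    (G (x, t)).2.resolve_left (by rw [hsnd]; exact ht)
  have hmem_closed : IsClosed {t : I | (G (x, t)).1.1 ∈ range i} :=
    hclosed.preimage (by fun_prop)
  have h0 : (G (x, 0)).1.1 ∈ range i :=
    hmem_closed.closure_subset (((dense_compl_singleton 0).mono hmem).closure_eq ▸ mem_univ 0)
  rwa [hG0] at h0

theorem isOpen_range [AlexandrovDiscrete X] [Small.{v} X] (hi : IsCofibration.{v} i)
    (hclosed : IsClosed (range i)) : IsOpen (range i) :=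
  isOpen_iff_forall_specializes.2 fun _ _ hx ⟨_, ha⟩ =>
    hi.mem_range_of_specializes hclosed (ha ▸ hx)

theorem surjective [AlexandrovDiscrete X] [PreconnectedSpace X] [Small.{v} X] [Nonempty A]
    (hi : IsCofibration.{v} i) (hclosed : IsClosed (range i)) : Surjective i :=
  range_eq_univ.1 <| IsClopen.eq_univ ⟨hclosed, hi.isOpen_range hclosed⟩ (range_nonempty i)

end IsCofibration

/-- A closed Hurewicz cofibration between non-empty connected finite
topological spaces is a homeomorphism. -/
theorem closed_cofibration_is_homeomorphism
    {X : Type u} {Y : Type u} [TopologicalSpace X] [TopologicalSpace Y]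
    [Finite X] [Finite Y] [ConnectedSpace X] [ConnectedSpace Y]
    (f : C(X, Y)) (hcof : IsCofibration f) (hclosed : IsClosedMap f) :
    ∃ e : X ≃ₜ Y, ⇑e = ⇑f :=
  have hbij : Bijective f := ⟨hcof.injective, hcof.surjective hclosed.isClosed_range⟩
  ⟨(Equiv.ofBijective f hbij).toHomeomorphOfContinuousClosed f.continuous hclosed, rfl⟩
end

section
/- Let X be a finite topological space and let A be a subspace of X, with inclusion map i : A → X. Then i is a Hurewicz cofibration if and only if the induced map i₀ : A₀ → X₀ between the Kolmogorov quotients (T₀-quotients, identifying points with the same open neighborhoods) is a Hurewicz cofibration. -/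
/-!
Any pointwise sections `sA : A₀ → A`, `sX : X₀ → X` of the quotient maps are continuous, and
they can be chosen with `sX ∘ i₀ = i ∘ sA`. An extension problem for `i₀` pulls back along the
quotient maps to one for `i`, whose solution is pushed forward along `sX`. Conversely, an
extension problem for `i` is moved to `X₀` along the sections and solved there; pulled back to
`X × I`, the solution has the prescribed values only up to inseparability, and since a map that
is pointwise inseparable from a continuous map is continuous, those values can be corrected.
-/

open unitInterval

set_option autoImplicit false

universe u v

universe w

open SeparationQuotient

/-- A test space for the homotopy extension property can be replaced by the subspace
`f(Y) ∪ H(B × I)`, which is `w`-small and hence homeomorphic to a space in `Type w`. -/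
theorem IsCofibration.of_small {B : Type*} {Y : Type*} [TopologicalSpace B]
    [TopologicalSpace Y] [Small.{w} B] [Small.{w} Y] {j : C(B, Y)}
    (hj : IsCofibration.{w} j) : IsCofibration.{v} j := by
  intro Z _ f H hH
  let e := Shrink.homeomorph.{w} (Set.range (Sum.elim f H))
  let f' : C(Y, Shrink (Set.range (Sum.elim f H))) :=
    ⟨fun y => e ⟨f y, Sum.inl y, rfl⟩, by fun_prop⟩
  let H' : C(B × I, Shrink (Set.range (Sum.elim f H))) :=
    ⟨fun p => e ⟨H p, Sum.inr p, rfl⟩, by fun_prop⟩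
  obtain ⟨G, hG₀, hGj⟩ := hj _ f' H' fun b => by simp [f', H', hH]
  exact ⟨⟨fun p => (e.symm (G p) : Z), by fun_prop⟩, fun y => by simp [hG₀, f'],
    fun b t => by simp [hGj, H']⟩

namespace SeparationQuotient

instance {Y : Type*} [TopologicalSpace Y] [Finite Y] : Finite (SeparationQuotient Y) :=
  Finite.of_surjective mk surjective_mk

variable {Y : Type*} [TopologicalSpace Y] {s : SeparationQuotient Y → Y}

theorem inseparable_of_rightInverse_mk (hs : Function.RightInverse s mk) (y : Y) :
    Inseparable y (s (mk y)) :=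
  mk_eq_mk.mp (hs (mk y)).symm

theorem continuous_of_rightInverse_mk (hs : Function.RightInverse s mk) : Continuous s :=
  isInducing_mk.continuous_iff.mpr <| hs.comp_eq_id ▸ continuous_id

end SeparationQuotient

section Transfer

variable {A X : Type*} [TopologicalSpace A] [TopologicalSpace X] {j : C(A, X)}
  {j₀ : C(SeparationQuotient A, SeparationQuotient X)} (hj₀ : ∀ a, j₀ (mk a) = mk (j a))
include hj₀

theorem SeparationQuotient.injective_of_isInducing (hj : Topology.IsInducing j) :
    Function.Injective j₀ := by
  intro α β hαβ
  obtain ⟨a, rfl⟩ := surjective_mk α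
  obtain ⟨b, rfl⟩ := surjective_mk β
  rw [hj₀, hj₀, mk_eq_mk] at hαβ
  exact mk_eq_mk.mpr (hj.inseparable_iff.mp hαβ)

theorem SeparationQuotient.exists_rightInverse_mk_comm (hinj : Function.Injective j₀) :
    ∃ (sA : SeparationQuotient A → A) (sX : SeparationQuotient X → X),
      Function.RightInverse sA mk ∧ Function.RightInverse sX mk ∧ ∀ α, sX (j₀ α) = j (sA α) := by
  let sA := Function.surjInv (surjective_mk (X := A))
  have hsA : Function.RightInverse sA mk := Function.surjInv_eq surjective_mk
  refine ⟨sA, Function.extend j₀ (j ∘ sA) (Function.surjInv surjective_mk), hsA, fun ξ => ?_,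
    hinj.extend_apply _ _⟩
  by_cases hξ : ∃ α, j₀ α = ξ
  · obtain ⟨α, rfl⟩ := hξ
    rw [hinj.extend_apply, Function.comp_apply, ← hj₀, hsA]
  · rw [Function.extend_apply' _ _ _ hξ]
    exact Function.surjInv_eq surjective_mk ξ

variable {sA : SeparationQuotient A → A} {sX : SeparationQuotient X → X}
  (hsA : Function.RightInverse sA mk) (hsX : Function.RightInverse sX mk)
  (hcomm : ∀ α, sX (j₀ α) = j (sA α))
include hsA hsX hcomm

theorem IsCofibration.separationQuotient (hj : IsCofibration.{v} j) :
    IsCofibration.{v} j₀ := by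
  intro Z _ f H hH
  obtain ⟨G, hG₀, hGj⟩ := hj Z (f.comp ⟨mk, continuous_mk⟩)
    (H.comp ⟨Prod.map mk id, by fun_prop⟩) fun a => by simp [hH, hj₀]
  have hsXc := continuous_of_rightInverse_mk hsX
  refine ⟨⟨fun p => G (sX p.1, p.2), by fun_prop⟩, fun ξ => ?_, fun α t => ?_⟩
  · simp [hG₀, hsX ξ]
  · simp [hcomm, hGj, hsA α]

theorem IsCofibration.of_separationQuotient (hj : Function.Injective j)
    (hj₀c : IsCofibration.{v} j₀) : IsCofibration.{v} j := by
  intro Z _ f H hH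
  have hsAc := continuous_of_rightInverse_mk hsA
  have hsXc := continuous_of_rightInverse_mk hsX
  obtain ⟨G₀, hG₀₀, hG₀j⟩ := hj₀c Z (f.comp ⟨sX, by fun_prop⟩)
    (H.comp ⟨Prod.map sA id, by fun_prop⟩) fun α => by simp [hH, hcomm]
  let G' : X × I → Z := fun p => G₀ (mk p.1, p.2)
  let G : X × I → Z := fun p => if p.2 = 0 then f p.1 else Function.extend (Prod.map j id) H G' p
  have hGj : ∀ a t, G (j a, t) = H (a, t) := by
    intro a t
    by_cases ht : t = 0
    · simp [G, ht, hH]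
    · simpa [G, ht] using (hj.prodMap Function.injective_id).extend_apply H G' (a, t)
  have hGG' : ∀ p, Inseparable (G p) (G' p) := by
    rintro ⟨x, t⟩
    by_cases ht : t = 0
    · simpa [G, G', ht, hG₀₀] using
        (inseparable_of_rightInverse_mk hsX x).map f.continuous
    by_cases hx : ∃ a, j a = x
    · obtain ⟨a, rfl⟩ := hx
      simpa [hGj, G', ← hj₀, hG₀j] using
        ((inseparable_of_rightInverse_mk hsA a).prod (.refl t)).map H.continuous
    · have hxt : ¬∃ q : A × I, Prod.map j id q = (x, t) := by
        rintro ⟨⟨a, _⟩, hq⟩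
        exact hx ⟨a, congrArg Prod.fst hq⟩
      simpa [G, ht, Function.extend_apply' _ _ _ hxt] using Inseparable.refl (G' (x, t))
  refine ⟨⟨G, (continuous_congr_of_inseparable hGG').mpr (by fun_prop)⟩, fun x => ?_, hGj⟩
  simp [G]

end Transfer

/-- Let `X` be a finite topological space and `A` a subspace, with
inclusion `i : A ↪ X`. Then `i` is a Hurewicz cofibration iff the induced map
`i₀ : A₀ → X₀` between the Kolmogorov quotients (the unique continuous map commuting
with the quotient maps) is a Hurewicz cofibration. -/
theorem cofibration_iff_kolmogorov_quotient_cofibration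
    {X : Type u} [TopologicalSpace X] [Finite X] (A : Set X)
    (i₀ : C(SeparationQuotient A, SeparationQuotient X))
    (h : ∀ a : A, i₀ (SeparationQuotient.mk a) = SeparationQuotient.mk (a : X)) :
    IsCofibration (⟨Subtype.val, continuous_subtype_val⟩ : C(A, X)) ↔
      IsCofibration i₀ := by
  have hinj : Function.Injective i₀ :=
    injective_of_isInducing (j := ⟨Subtype.val, continuous_subtype_val⟩) h .subtypeVal
  obtain ⟨sA, sX, hsA, hsX, hcomm⟩ :=
    exists_rightInverse_mk_comm (j := ⟨Subtype.val, continuous_subtype_val⟩) h hinj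
  constructor
  · intro hi
    have hi' : IsCofibration.{0} (⟨Subtype.val, continuous_subtype_val⟩ : C(A, X)) :=
      hi.of_small
    exact (hi'.separationQuotient h hsA hsX hcomm).of_small
  · intro hi₀
    have hi₀' : IsCofibration.{0} i₀ := hi₀.of_small
    exact (hi₀'.of_separationQuotient h hsA hsX hcomm Subtype.val_injective).of_small
end
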